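/- Let G be an r-regular finite simple graph on m vertices and Kₙ the complete graph on n vertices, with r ≤ n − 1. Then the sparing number of the edge corona G ⋄ Kₙ is φ(G ⋄ Kₙ) = r·m·n(n+1)/4. -/

import Mathlib

open Finset Pointwise

namespace IASIPaper

variable {V : Type*}

/-- The induced edge labeling: `f⁺(uv) = f(u) + f(v)` (sumset). -/
def edgeLabel (f : V → Finset ℕ) : Sym2 V → Finset ℕ :=
  Sym2.lift ⟨fun u v => f u + f v, fun u v => add_comm (f u) (f v)⟩

/-- An integer additive set-indexer of a simple graph `G`. -/
def IsIASI (G : SimpleGraph V) (f : V → Finset ℕ) : Prop :=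
  (∀ v, (f v).Nonempty) ∧ Function.Injective f ∧
    Set.InjOn (edgeLabel f) G.edgeSet

/-- A weak integer additive set-indexer. -/
def IsWeakIASI (G : SimpleGraph V) (f : V → Finset ℕ) : Prop :=
  IsIASI G f ∧ ∀ ⦃u v : V⦄, G.Adj u v → (f u + f v).card = max (f u).card (f v).card

/-- The number of mono-indexed edges of `G` under `f`. -/
noncomputable def monoEdgeCount (G : SimpleGraph V) (f : V → Finset ℕ) : ℕ :=
  {e | e ∈ G.edgeSet ∧ (edgeLabel f e).card = 1}.ncard

/-- The number of mono-indexed vertices under `f`. -/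
noncomputable def monoVertexCount (f : V → Finset ℕ) : ℕ :=
  {v | (f v).card = 1}.ncard

/-- The sparing number of `G`. -/
noncomputable def sparingNumber (G : SimpleGraph V) : ℕ :=
  sInf { k | ∃ f, IsWeakIASI G f ∧ monoEdgeCount G f = k }

/-- The minimum number of mono-indexed vertices among weak IASIs of `G`
attaining exactly `sparingNumber G` mono-indexed edges. -/
noncomputable def minMonoVertices (G : SimpleGraph V) : ℕ :=
  sInf { k | ∃ f, IsWeakIASI G f ∧ monoEdgeCount G f = sparingNumber G ∧
    monoVertexCount f = k }

/-- The edge corona `G₁ ⋄ G₂`: take one copy of `G₂` for every edge of `G₁`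
and join both end vertices of that edge to every vertex of the copy. -/
def edgeCorona {V₁ V₂ : Type*} (G₁ : SimpleGraph V₁) (G₂ : SimpleGraph V₂) :
    SimpleGraph (V₁ ⊕ (G₁.edgeSet × V₂)) where
  Adj a b :=
    match a, b with
    | Sum.inl u, Sum.inl v => G₁.Adj u v
    | Sum.inl u, Sum.inr ex => u ∈ (ex.1 : Sym2 V₁)
    | Sum.inr ex, Sum.inl v => v ∈ (ex.1 : Sym2 V₁)
    | Sum.inr ex, Sum.inr ey => ex.1 = ey.1 ∧ G₂.Adj ex.2 ey.2
  symm := by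
    constructor
    rintro (u | ⟨e, x⟩) (v | ⟨e', y⟩) h
    · exact h.symm
    · exact h
    · exact h
    · exact ⟨h.1.symm, h.2.symm⟩
  loopless := by
    constructor
    rintro (u | ⟨e, x⟩) h
    · exact G₁.irrefl h
    · exact G₂.irrefl h.2




lemma not_five_dvd (t : ℕ) : ¬ (5 ∣ 1 + 5^t) := by
  intro h
  rcases Nat.eq_zero_or_pos t with ht | ht
  · simp [ht] at h
  · have h5 : (5:ℕ) ∣ 5^t := dvd_pow_self 5 ht.ne'
    have : (5:ℕ) ∣ 1 := (Nat.dvd_add_right h5).mp (by rwa [Nat.add_comm] at h)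
    omega

lemma five_pow_mul_inj' {a c u v : ℕ} (hle : a ≤ c) (hu : ¬ 5 ∣ u)
    (h : 5^a * u = 5^c * v) : a = c := by
  by_contra hne
  have hlt : a < c := lt_of_le_of_ne hle hne
  have h' : 5^a * u = 5^a * (5^(c-a) * v) := by
    rw [h, ← mul_assoc, ← pow_add]
    congr 2
    omega
  have huv : u = 5^(c-a) * v := Nat.eq_of_mul_eq_mul_left (by positivity) h'
  exact hu ⟨5^(c-a-1) * v, by rw [huv, ← mul_assoc, ← pow_succ']; congr 2; omega⟩

lemma five_pow_mul_inj {a c u v : ℕ} (hu : ¬ 5 ∣ u) (hv : ¬ 5 ∣ v)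
    (h : 5^a * u = 5^c * v) : a = c := by
  rcases le_total a c with hle | hle
  · exact five_pow_mul_inj' hle hu h
  · exact (five_pow_mul_inj' hle hv h.symm).symm

lemma five_pow_inj {a b : ℕ} (h : (5:ℕ)^a = 5^b) : a = b :=
  Nat.pow_right_injective (by norm_num) h

lemma five_pow_add_ordered {a b c d : ℕ} (hab : a ≤ b) (hcd : c ≤ d)
    (h : 5^a + 5^b = 5^c + 5^d) : a = c ∧ b = d := by
  have h1 : 5^a * (1 + 5^(b-a)) = 5^c * (1 + 5^(d-c)) := by
    rw [Nat.mul_add, Nat.mul_add, mul_one, mul_one, ← pow_add, ← pow_add]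
    rw [show a + (b-a) = b by omega, show c + (d-c) = d by omega]
    exact h
  have hac : a = c := five_pow_mul_inj (not_five_dvd _) (not_five_dvd _) h1
  subst hac
  have h2 : 1 + 5^(b-a) = 1 + 5^(d-a) := Nat.eq_of_mul_eq_mul_left (by positivity) h1
  have h3 : b - a = d - a := five_pow_inj (by omega)
  exact ⟨rfl, by omega⟩

lemma five_pow_add_inj {a b c d : ℕ} (h : 5^a + 5^b = 5^c + 5^d) :
    (a = c ∧ b = d) ∨ (a = d ∧ b = c) := by
  rcases le_total a b with hab | hab <;> rcases le_total c d with hcd | hcd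
  · exact Or.inl (five_pow_add_ordered hab hcd h)
  · have := five_pow_add_ordered hab hcd (by omega)
    exact Or.inr ⟨this.1, this.2⟩
  · have := five_pow_add_ordered hab hcd (by omega : 5^b + 5^a = 5^c + 5^d)
    exact Or.inr ⟨this.2, this.1⟩
  · have := five_pow_add_ordered hab hcd (by omega : 5^b + 5^a = 5^d + 5^c)
    exact Or.inl ⟨this.2, this.1⟩

lemma pair_eq_pair' {x y z w : ℕ} (hxy : x < y) (hzw : z < w)
    (h : ({x, y} : Finset ℕ) = {z, w}) : x = z ∧ y = w := by
  have hx : x ∈ ({z, w} : Finset ℕ) := h ▸ (by simp)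
  have hy : y ∈ ({z, w} : Finset ℕ) := h ▸ (by simp)
  have hz : z ∈ ({x, y} : Finset ℕ) := h.symm ▸ (by simp)
  have hw : w ∈ ({x, y} : Finset ℕ) := h.symm ▸ (by simp)
  simp only [Finset.mem_insert, Finset.mem_singleton] at hx hy hz hw
  omega

/-- off-diagonal pairs count -/
lemma card_sym2_offdiag {α : Type*} [DecidableEq α] (s : Finset α) :
    ((s.sym2).filter fun p => ¬ p.IsDiag).card = s.card.choose 2 := by
  have hdiag : ((s.sym2).filter fun p => p.IsDiag) = s.image Sym2.diag := by
    ext p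
    induction p using Sym2.ind with
    | _ x y =>
      simp only [Finset.mem_filter, Finset.mem_sym2_iff, Sym2.mem_iff, Finset.mem_image,
        Sym2.mk_isDiag_iff]
      constructor
      · rintro ⟨hmem, rfl⟩
        exact ⟨x, hmem x (Or.inl rfl), rfl⟩
      · rintro ⟨a, ha, hp⟩
        rw [Sym2.diag] at hp
        rcases Sym2.eq_iff.mp hp with ⟨h1, h2⟩ | ⟨h1, h2⟩ <;>
          (subst h1; subst h2;
           exact ⟨fun z hz => by rcases hz with rfl | rfl <;> exact ha, rfl⟩)
  have hsplit := Finset.card_filter_add_card_filter_not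
    (s := s.sym2) (p := fun p => p.IsDiag)
  rw [hdiag, Finset.card_image_of_injective _ Sym2.diag_injective, Finset.card_sym2] at hsplit
  have hch : (s.card + 1).choose 2 = s.card + s.card.choose 2 := by
    rw [Nat.choose_succ_succ]
    simp [Nat.choose_one_right]
  omega



-- sumset card lemmas
lemma card_le_card_add_right' {A B : Finset ℕ} (hB : B.Nonempty) : A.card ≤ (A + B).card := by
  classical
  obtain ⟨b, hb⟩ := hB
  have hsub : A.image (· + b) ⊆ A + B := by
    intro x hx
    obtain ⟨a, ha, rfl⟩ := Finset.mem_image.mp hx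
    exact Finset.add_mem_add ha hb
  calc A.card = (A.image (· + b)).card := (Finset.card_image_of_injective _ (add_left_injective b)).symm
    _ ≤ _ := Finset.card_le_card hsub

lemma card_lt_card_add {A B : Finset ℕ} (hA : 2 ≤ A.card) (hB : B.Nonempty) :
    B.card < (A + B).card := by
  classical
  have hAne : A.Nonempty := Finset.card_pos.mp (by omega)
  set a0 := A.min' hAne
  set a1 := A.max' hAne
  have hlt : a0 < a1 := A.min'_lt_max'_of_card (by omega)
  set b1 := B.max' hB
  have hnot : a1 + b1 ∉ B.image (a0 + ·) := by
    intro h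
    obtain ⟨b, hb, hbe⟩ := Finset.mem_image.mp h
    have := B.le_max' b hb
    omega
  have hsub : insert (a1 + b1) (B.image (a0 + ·)) ⊆ A + B := by
    apply Finset.insert_subset
    · exact Finset.add_mem_add (A.max'_mem hAne) (B.max'_mem hB)
    · intro x hx
      obtain ⟨b, hb, rfl⟩ := Finset.mem_image.mp hx
      exact Finset.add_mem_add (A.min'_mem hAne) hb
  have := Finset.card_le_card hsub
  rw [Finset.card_insert_of_notMem hnot,
    Finset.card_image_of_injective _ (add_right_injective a0)] at this
  omega

lemma edgeLabel_mk (f : V → Finset ℕ) (a b : V) : edgeLabel f s(a, b) = f a + f b := rfl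

lemma weak_singleton_or {H : SimpleGraph V} {f : V → Finset ℕ} (hf : IsWeakIASI H f)
    {u v : V} (h : H.Adj u v) : (f u).card = 1 ∨ (f v).card = 1 := by
  by_contra hc
  push_neg at hc
  have hu1 := Finset.card_pos.mpr (hf.1.1 u)
  have hv1 := Finset.card_pos.mpr (hf.1.1 v)
  have hu : 2 ≤ (f u).card := by omega
  have hv : 2 ≤ (f v).card := by omega
  have heq := hf.2 h
  have h1 : (f v).card < (f u + f v).card := card_lt_card_add hu (hf.1.1 v)
  have h2 : (f u).card < (f v + f u).card := card_lt_card_add hv (hf.1.1 u)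
  rw [add_comm] at h2
  omega

lemma endpoint_singleton {f : V → Finset ℕ} (hne : ∀ w, (f w).Nonempty) {p : Sym2 V}
    (hp1 : (edgeLabel f p).card = 1) : ∀ w ∈ p, (f w).card = 1 := by
  induction p using Sym2.ind with
  | _ a b =>
    rw [edgeLabel_mk] at hp1
    intro w hw
    rw [Sym2.mem_iff] at hw
    have hb := Finset.card_pos.mpr (hne b)
    have hab : (f a).card ≤ (f a + f b).card := card_le_card_add_right' (hne b)
    have hba : (f b).card ≤ (f b + f a).card := card_le_card_add_right' (hne a)
    rw [add_comm] at hba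
    have ha' := Finset.card_pos.mpr (hne a)
    rcases hw with rfl | rfl <;> omega


section Corona

variable [Fintype V] [DecidableEq V] (G : SimpleGraph V) [DecidableRel G.Adj] (n : ℕ)
set_option linter.unusedSectionVars false

/-- endpoints of a `Sym2` as a finset -/
def endPair : Sym2 V → Finset V := Sym2.lift ⟨fun a b => {a, b}, fun a b => Finset.pair_comm a b⟩

omit [Fintype V] in
lemma mem_endPair {z : Sym2 V} {x : V} : x ∈ endPair z ↔ x ∈ z := by
  induction z using Sym2.ind with
  | _ a b => simp [endPair, Sym2.mem_iff]

/-- the clique block of an edge `e` in the edge corona -/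
def Ve (e : G.edgeSet) : Finset (V ⊕ (G.edgeSet × Fin n)) :=
  (endPair e.1).image Sum.inl ∪ Finset.univ.image (fun x : Fin n => Sum.inr (e, x))

set_option linter.unusedSectionVars false in
lemma mem_Ve {e : G.edgeSet} {w : V ⊕ (G.edgeSet × Fin n)} :
    w ∈ Ve G n e ↔ (∃ u, w = Sum.inl u ∧ u ∈ e.1) ∨ (∃ x, w = Sum.inr (e, x)) := by
  simp only [Ve, Finset.mem_union, Finset.mem_image, Finset.mem_univ, true_and]
  constructor
  · rintro (⟨u, hu, rfl⟩ | ⟨x, rfl⟩)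
    · exact Or.inl ⟨u, rfl, mem_endPair.mp hu⟩
    · exact Or.inr ⟨x, rfl⟩
  · rintro (⟨u, rfl, hu⟩ | ⟨x, rfl⟩)
    · exact Or.inl ⟨u, mem_endPair.mpr hu, rfl⟩
    · exact Or.inr ⟨x, rfl⟩

lemma card_Ve (e : G.edgeSet) : (Ve G n e).card = n + 2 := by
  obtain ⟨a, b, hab⟩ : ∃ a b, (e : Sym2 V) = s(a, b) := by
    obtain ⟨⟨a, b⟩, h⟩ := Quot.exists_rep (e : Sym2 V)
    exact ⟨a, b, h.symm⟩
  have hne : a ≠ b := by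
    intro h
    exact G.not_isDiag_of_mem_edgeSet e.2 (by rw [hab, Sym2.mk_isDiag_iff]; exact h)
  have h1 : (endPair (e : Sym2 V)).card = 2 := by
    rw [hab]
    simp [endPair, Finset.card_insert_of_notMem, hne]
  rw [Ve, Finset.card_union_of_disjoint, Finset.card_image_of_injective _ Sum.inl_injective,
    Finset.card_image_of_injective _ (fun x y h => by simpa using h), h1, Finset.card_univ,
    Fintype.card_fin]
  · omega
  · rw [Finset.disjoint_left]
    rintro w hw hw'
    obtain ⟨u, _, rfl⟩ := Finset.mem_image.mp hw
    obtain ⟨x, _, h⟩ := Finset.mem_image.mp hw'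
    exact absurd h (by simp)

lemma adj_of_mem_Ve {e : G.edgeSet} {a b : V ⊕ (G.edgeSet × Fin n)}
    (ha : a ∈ Ve G n e) (hb : b ∈ Ve G n e) (hab : a ≠ b) :
    (edgeCorona G (⊤ : SimpleGraph (Fin n))).Adj a b := by
  rw [mem_Ve] at ha hb
  rcases ha with ⟨u, rfl, hu⟩ | ⟨x, rfl⟩ <;> rcases hb with ⟨v, rfl, hv⟩ | ⟨y, rfl⟩
  · have huv : u ≠ v := fun h => hab (by rw [h])
    have : (e : Sym2 V) = s(u, v) := (Sym2.mem_and_mem_iff huv).mp ⟨hu, hv⟩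
    have he := e.2
    rw [this, SimpleGraph.mem_edgeSet] at he
    exact he
  · exact hu
  · exact hv
  · refine ⟨rfl, ?_⟩
    simp only [SimpleGraph.top_adj]
    intro h
    exact hab (by rw [h])

lemma exists_Ve_of_edge {p : Sym2 (V ⊕ (G.edgeSet × Fin n))}
    (hp : p ∈ (edgeCorona G (⊤ : SimpleGraph (Fin n))).edgeSet) :
    ∃ e : G.edgeSet, ∀ w ∈ p, w ∈ Ve G n e := by
  induction p using Sym2.ind with
  | _ a b =>
    rw [SimpleGraph.mem_edgeSet] at hp
    match a, b, hp with
    | Sum.inl u, Sum.inl v, hp =>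
      refine ⟨⟨s(u, v), hp⟩, ?_⟩
      intro w hw
      rw [Sym2.mem_iff] at hw
      rcases hw with rfl | rfl <;>
        exact (mem_Ve G n).mpr (Or.inl ⟨_, rfl, by simp⟩)
    | Sum.inl u, Sum.inr (e, x), hp =>
      refine ⟨e, ?_⟩
      intro w hw
      rw [Sym2.mem_iff] at hw
      rcases hw with rfl | rfl
      · exact (mem_Ve G n).mpr (Or.inl ⟨u, rfl, hp⟩)
      · exact (mem_Ve G n).mpr (Or.inr ⟨x, rfl⟩)
    | Sum.inr (e, x), Sum.inl v, hp =>
      refine ⟨e, ?_⟩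
      intro w hw
      rw [Sym2.mem_iff] at hw
      rcases hw with rfl | rfl
      · exact (mem_Ve G n).mpr (Or.inr ⟨x, rfl⟩)
      · exact (mem_Ve G n).mpr (Or.inl ⟨v, rfl, hp⟩)
    | Sum.inr (e, x), Sum.inr (e', y), hp =>
      have he : e = e' := hp.1
      subst he
      exact ⟨e, fun w hw => by
        rw [Sym2.mem_iff] at hw
        rcases hw with rfl | rfl
        · exact (mem_Ve G n).mpr (Or.inr ⟨x, rfl⟩)
        · exact (mem_Ve G n).mpr (Or.inr ⟨y, rfl⟩)⟩

lemma Ve_disj {e e' : G.edgeSet} (hne : e ≠ e') {p : Sym2 (V ⊕ (G.edgeSet × Fin n))}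
    (hd : ¬ p.IsDiag) (h1 : ∀ w ∈ p, w ∈ Ve G n e) (h2 : ∀ w ∈ p, w ∈ Ve G n e') : False := by
  induction p using Sym2.ind with
  | _ a b =>
    rw [Sym2.mk_isDiag_iff] at hd
    have ha1 := (mem_Ve G n).mp (h1 a (by simp))
    have hb1 := (mem_Ve G n).mp (h1 b (by simp))
    have ha2 := (mem_Ve G n).mp (h2 a (by simp))
    have hb2 := (mem_Ve G n).mp (h2 b (by simp))
    rcases ha1 with ⟨u, rfl, hu⟩ | ⟨x, rfl⟩
    · rcases hb1 with ⟨v, rfl, hv⟩ | ⟨y, rfl⟩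
      · -- both inl
        obtain ⟨u', hu', hu2⟩ | ⟨x, hx⟩ := ha2
        · obtain ⟨v', hv', hv2⟩ | ⟨y, hy⟩ := hb2
          · cases Sum.inl_injective hu'
            cases Sum.inl_injective hv'
            have huv : u ≠ v := fun h => hd (by rw [h])
            have h3 : (e : Sym2 V) = s(u, v) := (Sym2.mem_and_mem_iff huv).mp ⟨hu, hv⟩
            have h4 : (e' : Sym2 V) = s(u, v) := (Sym2.mem_and_mem_iff huv).mp ⟨hu2, hv2⟩
            exact hne (Subtype.ext (h3.trans h4.symm))
          · exact absurd hy (by simp)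
        · exact absurd hx (by simp)
      · -- b = inr (e, y); from h2, b ∈ Ve e' forces e = e'
        rcases hb2 with ⟨v, hv, _⟩ | ⟨y', hy'⟩
        · exact absurd hv (by simp)
        · exact hne (congrArg Prod.fst (Sum.inr_injective hy'))
    · rcases ha2 with ⟨u, hu, _⟩ | ⟨x', hx'⟩
      · exact absurd hu (by simp)
      · have : e = e' := by
          have := Sum.inr_injective hx'
          exact congrArg Prod.fst this
        exact hne this

lemma mono_iff_both_singleton {f : (V ⊕ (G.edgeSet × Fin n)) → Finset ℕ}
    (hf : IsWeakIASI (edgeCorona G (⊤ : SimpleGraph (Fin n))) f)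
    {p : Sym2 (V ⊕ (G.edgeSet × Fin n))}
    (hp : p ∈ (edgeCorona G (⊤ : SimpleGraph (Fin n))).edgeSet) :
    (edgeLabel f p).card = 1 ↔ ∀ w ∈ p, (f w).card = 1 := by
  constructor
  · exact fun h => endpoint_singleton hf.1.1 h
  · induction p using Sym2.ind with
  | _ a b =>
    intro h
    obtain ⟨x, hx⟩ := Finset.card_eq_one.mp (h a (by simp))
    obtain ⟨y, hy⟩ := Finset.card_eq_one.mp (h b (by simp))
    rw [edgeLabel_mk, hx, hy, Finset.singleton_add_singleton]
    exact Finset.card_singleton _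

lemma monoEdgeCount_eq (f : (V ⊕ (G.edgeSet × Fin n)) → Finset ℕ)
    (hf : IsWeakIASI (edgeCorona G (⊤ : SimpleGraph (Fin n))) f) :
    monoEdgeCount (edgeCorona G (⊤ : SimpleGraph (Fin n))) f =
      ∑ e : G.edgeSet,
        ((Ve G n e ∩ Finset.univ.filter (fun w => (f w).card = 1)).card).choose 2 := by
  classical
  set H := edgeCorona G (⊤ : SimpleGraph (Fin n)) with hH
  set T := Finset.univ.filter (fun w : V ⊕ (G.edgeSet × Fin n) => (f w).card = 1) with hT
  set B : Finset (Sym2 (V ⊕ (G.edgeSet × Fin n))) :=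
    Finset.univ.biUnion
      (fun e : G.edgeSet => ((Ve G n e ∩ T).sym2).filter (fun p => ¬ p.IsDiag)) with hB
  have hmem : ∀ q, q ∈ B ↔ ∃ e : G.edgeSet, (∀ w ∈ q, w ∈ Ve G n e ∩ T) ∧ ¬ q.IsDiag := by
    intro q
    simp only [hB, Finset.mem_biUnion, Finset.mem_univ, true_and, Finset.mem_filter,
      Finset.mem_sym2_iff]
  have hset : {p | p ∈ H.edgeSet ∧ (edgeLabel f p).card = 1} = ↑B := by
    ext p
    simp only [Set.mem_setOf_eq, Finset.mem_coe, hmem]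
    constructor
    · rintro ⟨hpe, hp1⟩
      obtain ⟨e, he⟩ := exists_Ve_of_edge G n hpe
      refine ⟨e, fun w hw => Finset.mem_inter.mpr ⟨he w hw, ?_⟩,
        fun hd => H.not_isDiag_of_mem_edgeSet hpe hd⟩
      rw [hT, Finset.mem_filter]
      exact ⟨Finset.mem_univ _, endpoint_singleton hf.1.1 hp1 w hw⟩
    · rintro ⟨e, hall, hd⟩
      have hpe : p ∈ H.edgeSet := by
        induction p using Sym2.ind with
        | _ a b =>
          rw [SimpleGraph.mem_edgeSet]
          refine adj_of_mem_Ve G n (Finset.mem_inter.mp (hall a (by simp))).1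
            (Finset.mem_inter.mp (hall b (by simp))).1 ?_
          intro hab
          exact hd (by rw [hab, Sym2.mk_isDiag_iff])
      refine ⟨hpe, ?_⟩
      rw [mono_iff_both_singleton G n hf hpe]
      intro w hw
      have := (Finset.mem_inter.mp (hall w hw)).2
      rw [hT, Finset.mem_filter] at this
      exact this.2
  have hdisj : ∀ e ∈ (Finset.univ : Finset G.edgeSet), ∀ e' ∈ Finset.univ, e ≠ e' →
      Disjoint (((Ve G n e ∩ T).sym2).filter (fun p => ¬ p.IsDiag))
        (((Ve G n e' ∩ T).sym2).filter (fun p => ¬ p.IsDiag)) := by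
    intro e _ e' _ hne
    rw [Finset.disjoint_left]
    intro q hq hq'
    rw [Finset.mem_filter, Finset.mem_sym2_iff] at hq hq'
    exact Ve_disj G n hne hq.2 (fun w hw => (Finset.mem_inter.mp (hq.1 w hw)).1)
      (fun w hw => (Finset.mem_inter.mp (hq'.1 w hw)).1)
  rw [monoEdgeCount, hset, Set.ncard_coe_finset, hB, Finset.card_biUnion hdisj]
  exact Finset.sum_congr rfl fun e _ => card_sym2_offdiag _

lemma card_inter_T_lower {f : (V ⊕ (G.edgeSet × Fin n)) → Finset ℕ}
    (hf : IsWeakIASI (edgeCorona G (⊤ : SimpleGraph (Fin n))) f) (e : G.edgeSet) :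
    n + 1 ≤ (Ve G n e ∩ Finset.univ.filter (fun w => (f w).card = 1)).card := by
  classical
  set T := Finset.univ.filter (fun w : V ⊕ (G.edgeSet × Fin n) => (f w).card = 1) with hT
  have hsd : (Ve G n e \ T).card ≤ 1 := by
    rw [Finset.card_le_one]
    intro a ha b hb
    by_contra hab
    rw [Finset.mem_sdiff] at ha hb
    have hadj := adj_of_mem_Ve G n ha.1 hb.1 hab
    have ha2 : (f a).card ≠ 1 := by
      intro h; exact ha.2 (Finset.mem_filter.mpr ⟨Finset.mem_univ _, h⟩)
    have hb2 : (f b).card ≠ 1 := by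
      intro h; exact hb.2 (Finset.mem_filter.mpr ⟨Finset.mem_univ _, h⟩)
    rcases weak_singleton_or hf hadj with h | h <;> [exact ha2 h; exact hb2 h]
  have := Finset.card_inter_add_card_sdiff (Ve G n e) T
  have hVe := card_Ve G n e
  omega

lemma singleton_add_pair (a p q : ℕ) : ({a} : Finset ℕ) + {p, q} = {a + p, a + q} := by
  ext x
  simp [Finset.mem_add]
  omega

noncomputable def ιW : (V ⊕ (G.edgeSet × Fin n)) → ℕ :=
  fun w => (Fintype.equivFin (V ⊕ (G.edgeSet × Fin n)) w : ℕ)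

lemma ιW_inj : Function.Injective (ιW G n) :=
  fun a b h => (Fintype.equivFin _).injective (Fin.ext h)

def isC (x₀ : Fin n) (w : V ⊕ (G.edgeSet × Fin n)) : Prop := ∃ e, w = Sum.inr (e, x₀)

open scoped Classical in
noncomputable def fCon (x₀ : Fin n) : (V ⊕ (G.edgeSet × Fin n)) → Finset ℕ := fun w =>
  if isC G n x₀ w then {5 ^ ιW G n w, 2 * 5 ^ ιW G n w} else {5 ^ ιW G n w}

lemma pow5_pos (i : ℕ) : 0 < (5:ℕ)^i := pow_pos (by norm_num) i

lemma fCon_pos {x₀ : Fin n} {w : V ⊕ (G.edgeSet × Fin n)} (h : isC G n x₀ w) :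
    fCon G n x₀ w = {5 ^ ιW G n w, 2 * 5 ^ ιW G n w} := by
  simp only [fCon]
  rw [if_pos h]

lemma fCon_neg {x₀ : Fin n} {w : V ⊕ (G.edgeSet × Fin n)} (h : ¬ isC G n x₀ w) :
    fCon G n x₀ w = {5 ^ ιW G n w} := by
  simp only [fCon]
  rw [if_neg h]

lemma card_fCon_pos {x₀ : Fin n} {w : V ⊕ (G.edgeSet × Fin n)} (h : isC G n x₀ w) :
    (fCon G n x₀ w).card = 2 := by
  have := pow5_pos (ιW G n w)
  rw [fCon_pos G n h,
    Finset.card_insert_of_notMem (by simp only [Finset.mem_singleton]; omega),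
    Finset.card_singleton]

lemma card_fCon_neg {x₀ : Fin n} {w : V ⊕ (G.edgeSet × Fin n)} (h : ¬ isC G n x₀ w) :
    (fCon G n x₀ w).card = 1 := by
  rw [fCon_neg G n h, Finset.card_singleton]

lemma fCon_nonempty (x₀ : Fin n) (w : V ⊕ (G.edgeSet × Fin n)) : (fCon G n x₀ w).Nonempty := by
  by_cases h : isC G n x₀ w
  · rw [fCon_pos G n h]; exact Finset.insert_nonempty _ _
  · rw [fCon_neg G n h]; exact Finset.singleton_nonempty _

lemma fCon_injective (x₀ : Fin n) : Function.Injective (fCon G n x₀) := by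
  intro a b h
  by_cases ha : isC G n x₀ a <;> by_cases hb : isC G n x₀ b
  · rw [fCon_pos G n ha, fCon_pos G n hb] at h
    have h1 := pow5_pos (ιW G n a)
    have h2 := pow5_pos (ιW G n b)
    obtain ⟨e1, -⟩ := pair_eq_pair' (by omega) (by omega) h
    exact ιW_inj G n (five_pow_inj e1)
  · have := congrArg Finset.card h
    rw [card_fCon_pos G n ha, card_fCon_neg G n hb] at this
    omega
  · have := congrArg Finset.card h
    rw [card_fCon_neg G n ha, card_fCon_pos G n hb] at this
    omega
  · rw [fCon_neg G n ha, fCon_neg G n hb] at h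
    exact ιW_inj G n (five_pow_inj (Finset.singleton_inj.mp h))

lemma label_CC {x₀ : Fin n} {a b : V ⊕ (G.edgeSet × Fin n)}
    (hadj : (edgeCorona G (⊤ : SimpleGraph (Fin n))).Adj a b)
    (ha : isC G n x₀ a) (hb : isC G n x₀ b) : False := by
  obtain ⟨e, rfl⟩ := ha
  obtain ⟨e', rfl⟩ := hb
  exact (⊤ : SimpleGraph (Fin n)).irrefl hadj.2

lemma fCon_label_one {x₀ : Fin n} {a b : V ⊕ (G.edgeSet × Fin n)}
    (ha : ¬ isC G n x₀ a) (hb : ¬ isC G n x₀ b) :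
    fCon G n x₀ a + fCon G n x₀ b = {5 ^ ιW G n a + 5 ^ ιW G n b} := by
  rw [fCon_neg G n ha, fCon_neg G n hb, Finset.singleton_add_singleton]

lemma fCon_label_two {x₀ : Fin n} {a b : V ⊕ (G.edgeSet × Fin n)}
    (ha : ¬ isC G n x₀ a) (hb : isC G n x₀ b) :
    fCon G n x₀ a + fCon G n x₀ b
      = {5 ^ ιW G n a + 5 ^ ιW G n b, 5 ^ ιW G n a + 2 * 5 ^ ιW G n b} := by
  rw [fCon_neg G n ha, fCon_pos G n hb, singleton_add_pair]

lemma fCon_inj_core {x₀ : Fin n} {a b c d : V ⊕ (G.edgeSet × Fin n)}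
    (ha : ¬ isC G n x₀ a) (hc : ¬ isC G n x₀ c)
    (h : fCon G n x₀ a + fCon G n x₀ b = fCon G n x₀ c + fCon G n x₀ d) :
    s(a, b) = s(c, d) := by
  by_cases hb : isC G n x₀ b <;> by_cases hd : isC G n x₀ d
  · rw [fCon_label_two G n ha hb, fCon_label_two G n hc hd] at h
    have h1 := pow5_pos (ιW G n b)
    have h2 := pow5_pos (ιW G n d)
    obtain ⟨e1, e2⟩ := pair_eq_pair' (by omega) (by omega) h
    have hbd : (5:ℕ) ^ ιW G n b = 5 ^ ιW G n d := by omega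
    have hac : (5:ℕ) ^ ιW G n a = 5 ^ ιW G n c := by omega
    rw [ιW_inj G n (five_pow_inj hbd), ιW_inj G n (five_pow_inj hac)]
  · rw [fCon_label_two G n ha hb, fCon_label_one G n hc hd] at h
    have h1 := pow5_pos (ιW G n b)
    have : (({5 ^ ιW G n a + 5 ^ ιW G n b,
        5 ^ ιW G n a + 2 * 5 ^ ιW G n b} : Finset ℕ)).card = 1 := by
      rw [h]; exact Finset.card_singleton _
    rw [Finset.card_insert_of_notMem (by simp only [Finset.mem_singleton]; omega),
      Finset.card_singleton] at this
    omega
  · rw [fCon_label_one G n ha hb, fCon_label_two G n hc hd] at h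
    have h2 := pow5_pos (ιW G n d)
    have : (({5 ^ ιW G n c + 5 ^ ιW G n d,
        5 ^ ιW G n c + 2 * 5 ^ ιW G n d} : Finset ℕ)).card = 1 := by
      rw [← h]; exact Finset.card_singleton _
    rw [Finset.card_insert_of_notMem (by simp only [Finset.mem_singleton]; omega),
      Finset.card_singleton] at this
    omega
  · rw [fCon_label_one G n ha hb, fCon_label_one G n hc hd] at h
    have := five_pow_add_inj (Finset.singleton_inj.mp h)
    rw [Sym2.eq_iff]
    rcases this with ⟨h1, h2⟩ | ⟨h1, h2⟩
    · exact Or.inl ⟨ιW_inj G n h1, ιW_inj G n h2⟩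
    · exact Or.inr ⟨ιW_inj G n h1, ιW_inj G n h2⟩

lemma fCon_weak (x₀ : Fin n) :
    IsWeakIASI (edgeCorona G (⊤ : SimpleGraph (Fin n))) (fCon G n x₀) := by
  constructor
  · refine ⟨fCon_nonempty G n x₀, fCon_injective G n x₀, ?_⟩
    intro p hp q hq h
    induction p using Sym2.ind with
    | _ a b =>
      induction q using Sym2.ind with
      | _ c d =>
        replace hp : (edgeCorona G (⊤ : SimpleGraph (Fin n))).Adj a b := hp
        replace hq : (edgeCorona G (⊤ : SimpleGraph (Fin n))).Adj c d := hq
        rw [edgeLabel_mk, edgeLabel_mk] at h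
        by_cases ha : isC G n x₀ a
        · have hb : ¬ isC G n x₀ b := fun hb => label_CC G n hp ha hb
          rw [show s(a, b) = s(b, a) from Sym2.eq_swap]
          rw [add_comm (fCon G n x₀ a)] at h
          by_cases hc : isC G n x₀ c
          · have hd : ¬ isC G n x₀ d := fun hd => label_CC G n hq hc hd
            rw [show s(c, d) = s(d, c) from Sym2.eq_swap]
            rw [add_comm (fCon G n x₀ c)] at h
            exact fCon_inj_core G n hb hd h
          · exact fCon_inj_core G n hb hc h
        · by_cases hc : isC G n x₀ c
          · have hd : ¬ isC G n x₀ d := fun hd => label_CC G n hq hc hd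
            rw [show s(c, d) = s(d, c) from Sym2.eq_swap]
            rw [add_comm (fCon G n x₀ c)] at h
            exact fCon_inj_core G n ha hd h
          · exact fCon_inj_core G n ha hc h
  · intro u v hadj
    by_cases hu : isC G n x₀ u <;> by_cases hv : isC G n x₀ v
    · exact absurd hv (fun hv => label_CC G n hadj hu hv)
    · rw [card_fCon_pos G n hu, card_fCon_neg G n hv, add_comm, fCon_neg G n hv,
        Finset.card_singleton_add, card_fCon_pos G n hu]
      norm_num
    · rw [card_fCon_neg G n hu, card_fCon_pos G n hv, fCon_neg G n hu,
        Finset.card_singleton_add, card_fCon_pos G n hv]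
      norm_num
    · rw [card_fCon_neg G n hu, card_fCon_neg G n hv, fCon_neg G n hu,
        Finset.card_singleton_add, card_fCon_neg G n hv]
      norm_num

lemma card_inter_T_fCon (x₀ : Fin n) (e : G.edgeSet) :
    (Ve G n e ∩ Finset.univ.filter (fun w => (fCon G n x₀ w).card = 1)).card = n + 1 := by
  classical
  have hsub : Ve G n e ∩ Finset.univ.filter (fun w => (fCon G n x₀ w).card = 1)
      = (Ve G n e).erase (Sum.inr (e, x₀)) := by
    ext w
    rw [Finset.mem_inter, Finset.mem_erase, Finset.mem_filter]
    constructor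
    · rintro ⟨hw, -, hcard⟩
      refine ⟨?_, hw⟩
      rintro rfl
      rw [card_fCon_pos G n ⟨e, rfl⟩] at hcard
      omega
    · rintro ⟨hne, hw⟩
      refine ⟨hw, Finset.mem_univ _, ?_⟩
      apply card_fCon_neg
      rintro ⟨e', rfl⟩
      rcases (mem_Ve G n).mp hw with ⟨u, hu, -⟩ | ⟨x, hx⟩
      · exact absurd hu (by simp)
      · have : e' = e := congrArg Prod.fst (Sum.inr_injective hx)
        exact hne (by rw [this])
  rw [hsub, Finset.card_erase_of_mem ((mem_Ve G n).mpr (Or.inr ⟨x₀, rfl⟩)), card_Ve]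
  omega

end Corona


/-- For an `r`-regular graph `G` on `m` vertices with `r ≤ n − 1`,
`φ(G ⋄ Kₙ) = r·m·n(n+1)/4`. -/
theorem sparing_edgeCorona_regular_complete {V : Type*} [Fintype V]
    (G : SimpleGraph V) [DecidableRel G.Adj] (r m n : ℕ)
    (hm : Fintype.card V = m) (hr : G.IsRegularOfDegree r) (hrn : r ≤ n - 1) :
    sparingNumber (edgeCorona G (⊤ : SimpleGraph (Fin n))) =
      r * m * (n * (n + 1)) / 4 := by
  classical
  rcases Nat.eq_zero_or_pos n with hn | hn
  · subst hn
    have hr0 : r = 0 := by omega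
    have hGadj : ∀ u v : V, ¬ G.Adj u v := by
      intro u v h
      have hd := hr u
      rw [← SimpleGraph.card_neighborFinset_eq_degree] at hd
      have hmem : v ∈ G.neighborFinset u := by rwa [SimpleGraph.mem_neighborFinset]
      rw [hr0, Finset.card_eq_zero] at hd
      rw [hd] at hmem
      exact absurd hmem (Finset.notMem_empty v)
    have hHadj : ∀ a b : V ⊕ (G.edgeSet × Fin 0),
        ¬ (edgeCorona G (⊤ : SimpleGraph (Fin 0))).Adj a b := by
      rintro (u | ⟨e, x⟩) (v | ⟨e', y⟩) h
      · exact hGadj u v h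
      · exact y.elim0
      · exact x.elim0
      · exact x.elim0
    set f : (V ⊕ (G.edgeSet × Fin 0)) → Finset ℕ := fun w => {5 ^ ιW G 0 w} with hf
    have hweak : IsWeakIASI (edgeCorona G (⊤ : SimpleGraph (Fin 0))) f := by
      refine ⟨⟨fun w => Finset.singleton_nonempty _, ?_, ?_⟩, ?_⟩
      · intro a b h
        rw [hf] at h
        exact ιW_inj G 0 (five_pow_inj (Finset.singleton_inj.mp h))
      · intro p hp
        exfalso
        induction p using Sym2.ind with
        | _ a b => exact hHadj a b hp
      · intro u v h
        exact absurd h (hHadj u v)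
    have hmono : monoEdgeCount (edgeCorona G (⊤ : SimpleGraph (Fin 0))) f = 0 := by
      have : {e | e ∈ (edgeCorona G (⊤ : SimpleGraph (Fin 0))).edgeSet ∧
          (edgeLabel f e).card = 1} = ∅ := by
        ext p
        simp only [Set.mem_setOf_eq, Set.mem_empty_iff_false, iff_false, not_and]
        intro hp
        exfalso
        induction p using Sym2.ind with
        | _ a b => exact hHadj a b hp
      rw [monoEdgeCount, this, Set.ncard_empty]
    have h0 : (0 : ℕ) ∈ {k | ∃ f, IsWeakIASI (edgeCorona G (⊤ : SimpleGraph (Fin 0))) f ∧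
        monoEdgeCount (edgeCorona G (⊤ : SimpleGraph (Fin 0))) f = k} := ⟨f, hweak, hmono⟩
    have hs : sparingNumber (edgeCorona G (⊤ : SimpleGraph (Fin 0))) = 0 :=
      Nat.eq_zero_of_le_zero (Nat.sInf_le h0)
    rw [hs]
    simp
  · have x₀ : Fin n := ⟨0, hn⟩
    set H := edgeCorona G (⊤ : SimpleGraph (Fin n)) with hH
    set N := Fintype.card G.edgeSet * Nat.choose (n + 1) 2 with hN
    have hmem : N ∈ {k | ∃ f, IsWeakIASI H f ∧ monoEdgeCount H f = k} := by
      refine ⟨fCon G n x₀, fCon_weak G n x₀, ?_⟩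
      rw [monoEdgeCount_eq G n _ (fCon_weak G n x₀),
        Finset.sum_congr rfl (fun e _ => by rw [card_inter_T_fCon G n x₀ e]),
        Finset.sum_const, Finset.card_univ, smul_eq_mul]
    have hlow : ∀ k ∈ {k | ∃ f, IsWeakIASI H f ∧ monoEdgeCount H f = k}, N ≤ k := by
      rintro k ⟨f, hf, rfl⟩
      rw [monoEdgeCount_eq G n f hf, hN]
      calc Fintype.card G.edgeSet * Nat.choose (n + 1) 2
          = ∑ _e : G.edgeSet, Nat.choose (n + 1) 2 := by
            rw [Finset.sum_const, Finset.card_univ, smul_eq_mul]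
        _ ≤ _ := Finset.sum_le_sum fun e _ =>
            Nat.choose_le_choose 2 (card_inter_T_lower G n hf e)
    have hspar : sparingNumber H = N := by
      rw [sparingNumber]
      exact le_antisymm (Nat.sInf_le hmem) (le_csInf ⟨N, hmem⟩ hlow)
    have hE : 2 * Fintype.card G.edgeSet = r * m := by
      have h1 := SimpleGraph.sum_degrees_eq_twice_card_edges G
      have h2 : ∑ v : V, G.degree v = r * m := by
        rw [Finset.sum_congr rfl (fun v _ => hr v), Finset.sum_const, Finset.card_univ, hm,
          smul_eq_mul, mul_comm]
      rw [SimpleGraph.edgeFinset_card, h2] at h1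
      omega
    obtain ⟨k, hk⟩ := Nat.even_mul_succ_self n
    have hch : Nat.choose (n + 1) 2 = k := by
      rw [Nat.choose_two_right]
      have h' : (n + 1) * (n + 1 - 1) = n * (n + 1) := by
        rw [Nat.add_sub_cancel]; ring
      rw [h']
      omega
    have h4 : r * m * (n * (n + 1)) = 4 * (Fintype.card G.edgeSet * k) := by
      rw [← hE]
      have : n * (n + 1) = 2 * k := by omega
      rw [this]; ring
    rw [hspar, hN, hch]
    omega

end IASIPaper
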